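/- arXiv:2303.00543 — 5 statements merged into one kernel-verified Lean document; each statement's English description precedes it below -/
import Mathlib

section
/- For all t with 0 < t < π/2, the inequality t·cot(t) − 1 > −t²/2 holds; and for all t > 0, the inequality t·coth(t) − 1 < t²/3 holds. -/
/-!
After multiplying by the positive `sin t`, resp. `sinh t`, each inequality says that a function
vanishing at `0` is positive to the right of `0`. This follows from monotonicity: the derivatives
are `t²/2 · cos t` and `t/3 · (t cosh t − sinh t)`, the latter positive because
`t cosh t − sinh t` vanishes at `0` and has derivative `t sinh t > 0`.
-/

open Real Set

lemma lt_of_hasDerivAt_pos {f f' : ℝ → ℝ} {a b : ℝ} (hab : a < b)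
    (hf : ∀ x ∈ Icc a b, HasDerivAt f (f' x) x) (hf' : ∀ x ∈ Ioo a b, 0 < f' x) :
    f a < f b := by
  refine strictMonoOn_of_deriv_pos (convex_Icc a b)
    (fun x hx ↦ (hf x hx).continuousAt.continuousWithinAt) (fun x hx ↦ ?_)
    (left_mem_Icc.2 hab.le) (right_mem_Icc.2 hab.le) hab
  rw [interior_Icc] at hx
  rw [(hf x (Ioo_subset_Icc_self hx)).deriv]
  exact hf' x hx

lemma Real.sin_sub_mul_cos_lt {t : ℝ} (ht : 0 < t) (ht' : t ≤ π / 2) :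
    sin t - t * cos t < t ^ 2 / 2 * sin t := by
  have hderiv (x : ℝ) : HasDerivAt (fun x ↦ x ^ 2 / 2 * sin x - sin x + x * cos x)
      (x ^ 2 / 2 * cos x) x :=
    (((((hasDerivAt_pow 2 x).div_const 2).mul (hasDerivAt_sin x)).sub (hasDerivAt_sin x)).add
      ((hasDerivAt_id x).mul (hasDerivAt_cos x))).congr_deriv (by simp only [id_eq]; ring)
  have hpos (x : ℝ) (hx : x ∈ Ioo 0 t) : 0 < x ^ 2 / 2 * cos x :=
    mul_pos (div_pos (pow_pos hx.1 2) two_pos)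
      (cos_pos_of_mem_Ioo ⟨by linarith [hx.1, pi_pos], by linarith [hx.2]⟩)
  have := lt_of_hasDerivAt_pos ht (fun x _ ↦ hderiv x) hpos
  norm_num at this
  linarith

lemma Real.sinh_lt_mul_cosh {t : ℝ} (ht : 0 < t) : sinh t < t * cosh t := by
  have hderiv (x : ℝ) : HasDerivAt (fun x ↦ x * cosh x - sinh x) (x * sinh x) x :=
    (((hasDerivAt_id x).mul (hasDerivAt_cosh x)).sub (hasDerivAt_sinh x)).congr_deriv
      (by simp only [id_eq]; ring)
  have := lt_of_hasDerivAt_pos ht (fun x _ ↦ hderiv x)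
    fun x hx ↦ mul_pos hx.1 (sinh_pos_iff.2 hx.1)
  norm_num at this
  linarith

lemma Real.mul_cosh_sub_sinh_lt {t : ℝ} (ht : 0 < t) :
    t * cosh t - sinh t < t ^ 2 / 3 * sinh t := by
  have hderiv (x : ℝ) : HasDerivAt (fun x ↦ x ^ 2 / 3 * sinh x + sinh x - x * cosh x)
      (x / 3 * (x * cosh x - sinh x)) x :=
    (((((hasDerivAt_pow 2 x).div_const 3).mul (hasDerivAt_sinh x)).add (hasDerivAt_sinh x)).sub
      ((hasDerivAt_id x).mul (hasDerivAt_cosh x))).congr_deriv (by simp only [id_eq]; ring)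
  have := lt_of_hasDerivAt_pos ht (fun x _ ↦ hderiv x)
    fun x hx ↦ mul_pos (by linarith [hx.1]) (sub_pos.2 (sinh_lt_mul_cosh hx.1))
  norm_num at this
  linarith

/-- For `0 < t < π/2` one has `t·cot t − 1 > −t²/2`, and for `t > 0` one has
`t·coth t − 1 < t²/3`. -/
theorem stmt3 :
    (∀ t : ℝ, 0 < t → t < Real.pi / 2 →
      t * (Real.cos t / Real.sin t) - 1 > -t ^ 2 / 2) ∧
    (∀ t : ℝ, 0 < t →
      t * (Real.cosh t / Real.sinh t) - 1 < t ^ 2 / 3) := by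
  refine ⟨fun t ht ht' ↦ ?_, fun t ht ↦ ?_⟩
  · have hsin : 0 < sin t := sin_pos_of_pos_of_lt_pi ht (by linarith [pi_pos])
    have key := sin_sub_mul_cos_lt ht ht'.le
    rw [gt_iff_lt, mul_div_assoc', div_sub_one hsin.ne', lt_div_iff₀ hsin]
    linarith
  · have hsinh : 0 < sinh t := sinh_pos_iff.2 ht
    have key := mul_cosh_sub_sinh_lt ht
    rw [mul_div_assoc', div_sub_one hsinh.ne', div_lt_iff₀ hsinh]
    linarith
end

section
/- Let Γ be a group acting on a compact metric space (F, d_F) by homeomorphisms via ρ₀, and suppose ρ₀ is (λ, U)-uniformly expanding for some λ > 1 and open cover U of F: for each x ∈ F there is U_x ∈ U and g_x ∈ Γ such that d_F(ρ₀(g_x)x', ρ₀(g_x)x'') ≥ λ d_F(x',x'') for all x', x'' ∈ U_x. Then there exists ε > 0 such that for any action ρ : Γ → Homeo(F), any two continuous surjective maps φ, φ' : F → F satisfying ρ₀(γ)∘φ = φ∘ρ(γ) and ρ₀(γ)∘φ' = φ'∘ρ(γ) for all γ ∈ Γ, with sup_{x∈F} d_F(φ(x), φ'(x)) < ε, must be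 equal: φ = φ'. -/
/-- Uniqueness of semi-conjugacies close to each other, for a uniformly expanding action.
Actions are encoded as maps `Γ → (F ≃ₜ F)` satisfying the action law.
If `ρ₀` is `(λ,𝒰)`-uniformly expanding (with `λ > 1` and `𝒰` an open cover of the compact
metric space `F`), then there is `ε > 0` such that for any action `ρ`, any two
`(ρ,ρ₀)`-semi-conjugacies `φ, φ'` (continuous surjections intertwining `ρ` with `ρ₀`)
with `sup_x d(φ x, φ' x) < ε` coincide. -/
theorem stmt6 {Γ F : Type*} [Group Γ] [MetricSpace F] [CompactSpace F]
    (ρ₀ : Γ → (F ≃ₜ F)) (hρ₀ : ∀ g h : Γ, ∀ x : F, ρ₀ (g * h) x = ρ₀ g (ρ₀ h x))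
    (lam : ℝ) (hlam : 1 < lam)
    (𝒰 : Set (Set F)) (hopen : ∀ U ∈ 𝒰, IsOpen U)
    (hexp : ∀ x : F, ∃ U ∈ 𝒰, x ∈ U ∧ ∃ g : Γ,
      ∀ x' ∈ U, ∀ x'' ∈ U, lam * dist x' x'' ≤ dist (ρ₀ g x') (ρ₀ g x'')) :
    ∃ ε > (0 : ℝ), ∀ (ρ : Γ → (F ≃ₜ F)),
      (∀ g h : Γ, ∀ x : F, ρ (g * h) x = ρ g (ρ h x)) →
      ∀ (φ φ' : F → F),
      Continuous φ → Function.Surjective φ →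
      Continuous φ' → Function.Surjective φ' →
      (∀ γ : Γ, ∀ x : F, ρ₀ γ (φ x) = φ (ρ γ x)) →
      (∀ γ : Γ, ∀ x : F, ρ₀ γ (φ' x) = φ' (ρ γ x)) →
      (∀ x : F, dist (φ x) (φ' x) < ε) →
      φ = φ' := by
  -- The "good" sets: elements of 𝒰 on which some group element expands.
  set 𝒱 : Set (Set F) :=
    {U | U ∈ 𝒰 ∧ ∃ g : Γ, ∀ x' ∈ U, ∀ x'' ∈ U,
      lam * dist x' x'' ≤ dist (ρ₀ g x') (ρ₀ g x'')} with h𝒱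
  have hVopen : ∀ V : 𝒱, IsOpen (V : Set F) := fun V => hopen _ V.2.1
  have hVcover : (Set.univ : Set F) ⊆ ⋃ V : 𝒱, (V : Set F) := by
    intro x _
    obtain ⟨U, hU, hxU, g, hg⟩ := hexp x
    exact Set.mem_iUnion.2 ⟨⟨U, hU, g, hg⟩, hxU⟩
  obtain ⟨δ, hδ, hball⟩ :=
    lebesgue_number_lemma_of_metric isCompact_univ hVopen hVcover
  refine ⟨δ, hδ, ?_⟩
  intro ρ hρ φ φ' hφc hφs hφ'c hφ's hint hint' hclose
  cases isEmpty_or_nonempty F with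
  | inl h => funext x; exact h.elim x
  | inr h =>
    -- maximize the distance function
    obtain ⟨x₀, -, hmax⟩ :=
      isCompact_univ.exists_isMaxOn Set.univ_nonempty
        ((hφc.dist hφ'c).continuousOn)
    set M := dist (φ x₀) (φ' x₀) with hM
    have hle : ∀ x : F, dist (φ x) (φ' x) ≤ M := fun x => hmax (Set.mem_univ x)
    have hM0 : M ≤ 0 := by
      by_contra hpos
      push_neg at hpos
      obtain ⟨V, hV⟩ := hball (φ x₀) (Set.mem_univ _)
      obtain ⟨g, hg⟩ := V.2.2
      have h1 : φ x₀ ∈ (V : Set F) := hV (Metric.mem_ball_self hδ)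
      have h2 : φ' x₀ ∈ (V : Set F) := by
        apply hV
        rw [Metric.mem_ball, dist_comm]
        exact hclose x₀
      have := hg _ h1 _ h2
      rw [hint g x₀, hint' g x₀] at this
      have h3 : dist (φ (ρ g x₀)) (φ' (ρ g x₀)) ≤ M := hle _
      nlinarith
    funext x
    have := hle x
    have := dist_nonneg (x := φ x) (y := φ' x)
    exact eq_of_dist_eq_zero (le_antisymm (by linarith) dist_nonneg)
end

section
/- Let Γ be a group acting by bi-Lipschitz homeomorphisms on a compact metric space F via ρ₀ which is (λ, U)-uniformly expanding for λ > 1. Then there exist ε₀ > 0 and λ' with 1 < λ' < λ such that: if ρ : Γ → Homeo(F) is an action for which all the expanding elements ρ(γ_i) are λ'-expanding on the corresponding cover elements U_i, and φ is a (ρ, ρ₀)-semi-conjugacy with sup_x d_F(φ(x), x) < ε₀, then φ is injective (hence a conjugacy, i.e. a homeomorphism). -/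
/-- Upgrading a semi-conjugacy to a conjugacy for uniformly expanding actions.
Let `ρ₀ : Γ → Homeo(F)` be `(λ,U)`-uniformly expanding on the compact metric space `F`,
witnessed by a finite open cover `U₁,…,U_k` and elements `γ₁,…,γ_k` with `ρ₀(γᵢ)`
`λ`-expanding on `Uᵢ`.  Then there exist `ε₀ > 0` and `λ'` with `1 < λ' < λ` such that:
for any action `ρ` whose elements `ρ(γᵢ)` are `λ'`-expanding on `Uᵢ`, and any
`(ρ,ρ₀)`-semi-conjugacy `φ` with `sup_x d(φ x, x) < ε₀`, the map `φ` is injective,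
hence a homeomorphism (a conjugacy). -/
theorem stmt7 {Γ F : Type*} [Group Γ] [MetricSpace F] [CompactSpace F]
    (ρ₀ : Γ → (F ≃ₜ F)) (hρ₀ : ∀ g h : Γ, ∀ x : F, ρ₀ (g * h) x = ρ₀ g (ρ₀ h x))
    (lam : ℝ) (hlam : 1 < lam)
    (k : ℕ) (U : Fin k → Set F) (hUopen : ∀ i, IsOpen (U i))
    (hUcov : (⋃ i, U i) = Set.univ)
    (γ : Fin k → Γ)
    (hexp : ∀ i, ∀ x ∈ U i, ∀ y ∈ U i,
      lam * dist x y ≤ dist (ρ₀ (γ i) x) (ρ₀ (γ i) y)) :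
    ∃ ε₀ > (0 : ℝ), ∃ lam' : ℝ, 1 < lam' ∧ lam' < lam ∧
      ∀ (ρ : Γ → (F ≃ₜ F)),
        (∀ g h : Γ, ∀ x : F, ρ (g * h) x = ρ g (ρ h x)) →
        (∀ i, ∀ x ∈ U i, ∀ y ∈ U i,
          lam' * dist x y ≤ dist (ρ (γ i) x) (ρ (γ i) y)) →
        ∀ φ : F → F,
          Continuous φ → Function.Surjective φ →
          (∀ g : Γ, ∀ x : F, ρ₀ g (φ x) = φ (ρ g x)) →
          (∀ x : F, dist (φ x) x < ε₀) →
          Function.Injective φ ∧ ∃ h : F ≃ₜ F, ⇑h = φ := by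
  obtain ⟨δ, hδ, hleb⟩ := lebesgue_number_lemma_of_metric (isCompact_univ (X := F)) hUopen
    (by rw [hUcov])
  refine ⟨δ / 4, by positivity, (1 + lam) / 2, by linarith, by linarith, ?_⟩
  intro ρ hρ hexp' φ hφc hφs hsemi hdist
  have hinj : Function.Injective φ := by
    -- the set of identified pairs
    set S : Set (F × F) := {p | φ p.1 = φ p.2} with hS
    have hScl : IsClosed S := isClosed_eq (hφc.comp continuous_fst) (hφc.comp continuous_snd)
    have hScomp : IsCompact S := hScl.isCompact
    intro x y hxy
    have hmem : (x, y) ∈ S := hxy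
    obtain ⟨⟨a, b⟩, habS, hmax⟩ := hScomp.exists_isMaxOn ⟨(x, y), hmem⟩
      (f := fun p : F × F => dist p.1 p.2) continuous_dist.continuousOn
    -- it suffices that the maximal pair is trivial
    by_cases hab : a = b
    · have : dist x y ≤ dist a b := hmax hmem
      simp only [hab, dist_self] at this
      exact dist_le_zero.mp this
    · exfalso
      have hD : 0 < dist a b := dist_pos.mpr hab
      have hab2 : dist a b < δ := by
        calc dist a b ≤ dist a (φ a) + dist (φ a) b := dist_triangle _ _ _
          _ = dist (φ a) a + dist (φ b) b := by rw [habS]; rw [dist_comm]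
          _ < δ / 4 + δ / 4 := add_lt_add (hdist a) (hdist b)
          _ < δ := by linarith
      obtain ⟨i, hi⟩ := hleb a (Set.mem_univ a)
      have haU : a ∈ U i := hi (Metric.mem_ball_self hδ)
      have hbU : b ∈ U i := hi (by simpa [Metric.mem_ball, dist_comm] using hab2)
      have hmemS : ((ρ (γ i)) a, (ρ (γ i)) b) ∈ S := by
        show φ ((ρ (γ i)) a) = φ ((ρ (γ i)) b)
        rw [← hsemi, ← hsemi, habS]
      have h1 : (1 + lam) / 2 * dist a b ≤ dist ((ρ (γ i)) a) ((ρ (γ i)) b) :=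
        hexp' i a haU b hbU
      have h2 : dist ((ρ (γ i)) a) ((ρ (γ i)) b) ≤ dist a b := hmax hmemS
      nlinarith
  refine ⟨hinj, ?_⟩
  have hbij : Function.Bijective φ := ⟨hinj, hφs⟩
  let e := Equiv.ofBijective φ hbij
  exact ⟨Continuous.homeoOfEquivCompactToT2 (f := e) hφc, rfl⟩
end

section
/- Let Γ₀ ⊴ Γ be a normal subgroup with Γ/Γ₀ finitely generated, F a compact metric space, and ρ₀ : Γ → Homeo(F). Suppose for every ε > 0 there is a neighborhood U(ε) of ρ₀ (in the product of uniform topologies over a finite generating set) such that for every ρ ∈ U(ε) that is semi-conjugate on Γ₀, there is exactly one (ρ|_{Γ₀}, ρ₀|_{Γ₀})-semi-conjugacy φ_ρ with d₀(φ_ρ, id) < ε. Then there is a neighborhood U₀ of ρ₀ such that for every ρ ∈ U₀ with ρ|_{Γ₀} semi-conjugate to ρ₀|_{Γ₀}, the map φ_ρ intertwines the full Γ-actions: ρ₀(γ)∘φ_ρ = φ_ρ∘ρ(γ) for all γ ∈ Γ. -/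
theorem act_one {Γ F : Type*} [Group Γ] [TopologicalSpace F] (ρ : Γ → (F ≃ₜ F))
    (hρ : ∀ g h : Γ, ∀ x : F, ρ (g * h) x = ρ g (ρ h x)) (x : F) : ρ 1 x = x := by
  have h1 : ρ 1 x = ρ 1 (ρ 1 x) := by simpa using hρ 1 1 x
  exact ((ρ 1).injective h1).symm

theorem modulus {F : Type*} [MetricSpace F] [CompactSpace F] (f : F → F) (hf : Continuous f)
    {ε : ℝ} (hε : 0 < ε) : ∃ δ > 0, ∀ u v : F, dist u v < δ → dist (f u) (f v) < ε := by
  have := CompactSpace.uniformContinuous_of_continuous hf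
  rw [Metric.uniformContinuous_iff] at this
  obtain ⟨δ, hδ, h⟩ := this ε hε
  exact ⟨δ, hδ, fun u v huv => h huv⟩

theorem finset_aux {α : Type*} (A : Finset α) (Q : α → ℝ → Prop)
    (h : ∀ a ∈ A, ∃ δ > 0, Q a δ)
    (mono : ∀ a δ δ', 0 < δ' → δ' ≤ δ → Q a δ → Q a δ') :
    ∃ δ > 0, ∀ a ∈ A, Q a δ := by
  classical
  induction A using Finset.induction with
  | empty => exact ⟨1, one_pos, by simp⟩
  | @insert a s ha ih =>
    obtain ⟨δ₁, hδ₁, hQ₁⟩ := h a (Finset.mem_insert_self a s)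
    obtain ⟨δ₂, hδ₂, hQ₂⟩ := ih (fun b hb => h b (Finset.mem_insert_of_mem hb))
    refine ⟨min δ₁ δ₂, lt_min hδ₁ hδ₂, fun b hb => ?_⟩
    rcases Finset.mem_insert.mp hb with rfl | hb
    · exact mono b δ₁ _ (lt_min hδ₁ hδ₂) (min_le_left _ _) hQ₁
    · exact mono b δ₂ _ (lt_min hδ₁ hδ₂) (min_le_right _ _) (hQ₂ b hb)

theorem propagate {Γ F : Type*} [Group Γ] [MetricSpace F] [CompactSpace F]
    (T : Finset Γ) (hT : Subgroup.closure (T : Set Γ) = ⊤)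
    (ρ₀ : Γ → (F ≃ₜ F)) (hρ₀ : ∀ g h : Γ, ∀ x : F, ρ₀ (g * h) x = ρ₀ g (ρ₀ h x))
    (g : Γ) : ∀ η > (0 : ℝ), ∃ δ > (0 : ℝ), ∀ ρ : Γ → (F ≃ₜ F),
      (∀ g h : Γ, ∀ x : F, ρ (g * h) x = ρ g (ρ h x)) →
      (∀ s ∈ T, ∀ x : F, dist (ρ s x) (ρ₀ s x) < δ) →
      ∀ x : F, dist (ρ g x) (ρ₀ g x) < η := by
  have hg : g ∈ Subgroup.closure (T : Set Γ) := hT ▸ Subgroup.mem_top g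
  induction hg using Subgroup.closure_induction with
  | mem s hs =>
    intro η hη
    exact ⟨η, hη, fun ρ hρ hclose x => hclose s hs x⟩
  | one =>
    intro η hη
    refine ⟨1, one_pos, fun ρ hρ hclose x => ?_⟩
    rw [act_one ρ hρ, act_one ρ₀ hρ₀]
    simpa using hη
  | mul a b ha hb iha ihb =>
    intro η hη
    obtain ⟨η', hη', hmod⟩ := modulus (fun u => ρ₀ a u) (ρ₀ a).continuous (half_pos hη)
    obtain ⟨δa, hδa, Ha⟩ := iha (η / 2) (half_pos hη)
    obtain ⟨δb, hδb, Hb⟩ := ihb η' hη'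
    refine ⟨min δa δb, lt_min hδa hδb, fun ρ hρ hclose x => ?_⟩
    have hca : ∀ s ∈ T, ∀ x : F, dist (ρ s x) (ρ₀ s x) < δa :=
      fun s hs x => lt_of_lt_of_le (hclose s hs x) (min_le_left _ _)
    have hcb : ∀ s ∈ T, ∀ x : F, dist (ρ s x) (ρ₀ s x) < δb :=
      fun s hs x => lt_of_lt_of_le (hclose s hs x) (min_le_right _ _)
    rw [hρ a b x, hρ₀ a b x]
    calc dist (ρ a (ρ b x)) (ρ₀ a (ρ₀ b x))
        ≤ dist (ρ a (ρ b x)) (ρ₀ a (ρ b x)) + dist (ρ₀ a (ρ b x)) (ρ₀ a (ρ₀ b x)) :=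
          dist_triangle _ _ _
      _ < η / 2 + η / 2 :=
          add_lt_add (Ha ρ hρ hca _) (hmod _ _ (Hb ρ hρ hcb x))
      _ = η := add_halves η
  | inv a ha iha =>
    intro η hη
    obtain ⟨η', hη', hmod⟩ := modulus (fun u => ρ₀ a⁻¹ u) (ρ₀ a⁻¹).continuous hη
    obtain ⟨δa, hδa, Ha⟩ := iha η' hη'
    refine ⟨δa, hδa, fun ρ hρ hclose x => ?_⟩
    have key : dist (ρ₀ a⁻¹ (ρ a (ρ a⁻¹ x))) (ρ₀ a⁻¹ (ρ₀ a (ρ a⁻¹ x))) < η :=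
      hmod _ _ (Ha ρ hρ hclose _)
    have e1 : ρ₀ a⁻¹ (ρ₀ a (ρ a⁻¹ x)) = ρ a⁻¹ x := by
      rw [← hρ₀ a⁻¹ a]; simp [act_one ρ₀ hρ₀]
    have e2 : ρ a (ρ a⁻¹ x) = x := by
      rw [← hρ a a⁻¹]; simp [act_one ρ hρ]
    rw [e1, e2] at key
    exact (dist_comm (ρ a⁻¹ x) (ρ₀ a⁻¹ x) ▸ key)

/-- Promoting semi-conjugacies from a normal subgroup to the whole group.
`Γ₀ ⊴ Γ` is a normal subgroup, `A` is a finite set generating `Γ` together with `Γ₀`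
(so `Γ/Γ₀` is finitely generated), and `T` is a fixed finite generating set of `Γ` used to
measure closeness of actions (actions are encoded as `Γ → F ≃ₜ F` with the action law).
Hypothesis: for every `ε > 0` there is `δ > 0` such that any action `ρ` that is `δ`-close
to `ρ₀` on `T` and admits a `(ρ|_{Γ₀}, ρ₀|_{Γ₀})`-semi-conjugacy admits exactly one such
semi-conjugacy within uniform distance `ε` of the identity.
Conclusion: there are `ε₀, δ₀ > 0` such that for every action `ρ` that is `δ₀`-close to
`ρ₀` on `T`, every `(ρ|_{Γ₀}, ρ₀|_{Γ₀})`-semi-conjugacy `φ` within `ε₀` of the identity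
intertwines the full `Γ`-actions. -/
theorem stmt8 {Γ F : Type*} [Group Γ] [MetricSpace F] [CompactSpace F]
    (Γ₀ : Subgroup Γ) [Γ₀.Normal]
    (A : Finset Γ) (hA : Γ₀ ⊔ Subgroup.closure (A : Set Γ) = ⊤)
    (T : Finset Γ) (hT : Subgroup.closure (T : Set Γ) = ⊤)
    (ρ₀ : Γ → (F ≃ₜ F)) (hρ₀ : ∀ g h : Γ, ∀ x : F, ρ₀ (g * h) x = ρ₀ g (ρ₀ h x))
    (huniq : ∀ ε > (0 : ℝ), ∃ δ > (0 : ℝ), ∀ ρ : Γ → (F ≃ₜ F),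
      (∀ g h : Γ, ∀ x : F, ρ (g * h) x = ρ g (ρ h x)) →
      (∀ s ∈ T, ∀ x : F, dist (ρ s x) (ρ₀ s x) < δ) →
      (∃ φ : F → F, Continuous φ ∧ Function.Surjective φ ∧
        ∀ h ∈ Γ₀, ∀ x : F, ρ₀ h (φ x) = φ (ρ h x)) →
      ∃! φ : F → F, Continuous φ ∧ Function.Surjective φ ∧
        (∀ h ∈ Γ₀, ∀ x : F, ρ₀ h (φ x) = φ (ρ h x)) ∧
        (∀ x : F, dist (φ x) x < ε)) :
    ∃ ε₀ > (0 : ℝ), ∃ δ₀ > (0 : ℝ), ∀ ρ : Γ → (F ≃ₜ F),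
      (∀ g h : Γ, ∀ x : F, ρ (g * h) x = ρ g (ρ h x)) →
      (∀ s ∈ T, ∀ x : F, dist (ρ s x) (ρ₀ s x) < δ₀) →
      ∀ φ : F → F, Continuous φ → Function.Surjective φ →
        (∀ h ∈ Γ₀, ∀ x : F, ρ₀ h (φ x) = φ (ρ h x)) →
        (∀ x : F, dist (φ x) x < ε₀) →
        ∀ γ : Γ, ∀ x : F, ρ₀ γ (φ x) = φ (ρ γ x) := by
  obtain ⟨δ₁, hδ₁, H₁⟩ := huniq 1 one_pos
  -- Q a δ : closeness δ on T and dist(φ,id) < δ force ψ_a within 1 of id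
  set Q : Γ → ℝ → Prop := fun a δ => ∀ ρ : Γ → (F ≃ₜ F),
      (∀ g h : Γ, ∀ x : F, ρ (g * h) x = ρ g (ρ h x)) →
      (∀ s ∈ T, ∀ x : F, dist (ρ s x) (ρ₀ s x) < δ) →
      ∀ φ : F → F, (∀ x : F, dist (φ x) x < δ) →
      ∀ x : F, dist (ρ₀ a⁻¹ (φ (ρ a x))) x < 1 with hQdef
  have hQ : ∀ a ∈ A, ∃ δ > 0, Q a δ := by
    intro a _
    obtain ⟨ηa, hηa, hmod⟩ := modulus (fun u => ρ₀ a⁻¹ u) (ρ₀ a⁻¹).continuous one_pos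
    obtain ⟨δa, hδa, Ha⟩ := propagate T hT ρ₀ hρ₀ a (ηa / 2) (half_pos hηa)
    refine ⟨min δa (ηa / 2), lt_min hδa (half_pos hηa), ?_⟩
    intro ρ hρ hclose φ hφ x
    have hca : ∀ s ∈ T, ∀ x : F, dist (ρ s x) (ρ₀ s x) < δa :=
      fun s hs x => lt_of_lt_of_le (hclose s hs x) (min_le_left _ _)
    have hd : dist (φ (ρ a x)) (ρ₀ a x) < ηa := by
      calc dist (φ (ρ a x)) (ρ₀ a x)
          ≤ dist (φ (ρ a x)) (ρ a x) + dist (ρ a x) (ρ₀ a x) := dist_triangle _ _ _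
        _ < ηa / 2 + ηa / 2 :=
            add_lt_add (lt_of_lt_of_le (hφ _) (min_le_right _ _)) (Ha ρ hρ hca x)
        _ = ηa := add_halves ηa
    have : dist (ρ₀ a⁻¹ (φ (ρ a x))) (ρ₀ a⁻¹ (ρ₀ a x)) < 1 := hmod _ _ hd
    have e : ρ₀ a⁻¹ (ρ₀ a x) = x := by rw [← hρ₀ a⁻¹ a]; simp [act_one ρ₀ hρ₀]
    rwa [e] at this
  have hQmono : ∀ a δ δ', 0 < δ' → δ' ≤ δ → Q a δ → Q a δ' := by
    intro a δ δ' _ hle hQa ρ hρ hclose φ hφ x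
    exact hQa ρ hρ (fun s hs x => lt_of_lt_of_le (hclose s hs x) hle) φ
      (fun x => lt_of_lt_of_le (hφ x) hle) x
  obtain ⟨δA, hδA, HA⟩ := finset_aux A Q hQ hQmono
  refine ⟨min δA (min δ₁ 1), lt_min hδA (lt_min hδ₁ one_pos),
    min δA (min δ₁ 1), lt_min hδA (lt_min hδ₁ one_pos), ?_⟩
  intro ρ hρ hclose φ hφc hφs hφsemi hφd
  -- basic consequences
  have hcA : ∀ s ∈ T, ∀ x : F, dist (ρ s x) (ρ₀ s x) < δA :=
    fun s hs x => lt_of_lt_of_le (hclose s hs x) (min_le_left _ _)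
  have hc1 : ∀ s ∈ T, ∀ x : F, dist (ρ s x) (ρ₀ s x) < δ₁ :=
    fun s hs x => lt_of_lt_of_le (hclose s hs x) ((min_le_right _ _).trans (min_le_left _ _))
  have hφdA : ∀ x : F, dist (φ x) x < δA :=
    fun x => lt_of_lt_of_le (hφd x) (min_le_left _ _)
  have hφd1 : ∀ x : F, dist (φ x) x < 1 :=
    fun x => lt_of_lt_of_le (hφd x) ((min_le_right _ _).trans (min_le_right _ _))
  obtain ⟨φ!, hφ!, hu⟩ := H₁ ρ hρ hc1 ⟨φ, hφc, hφs, hφsemi⟩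
  have hφeq : φ = φ! := hu φ ⟨hφc, hφs, hφsemi, hφd1⟩
  -- each a ∈ A intertwines
  have hAmem : ∀ a ∈ A, ∀ x : F, ρ₀ a (φ x) = φ (ρ a x) := by
    intro a haA x
    set ψ : F → F := fun x => ρ₀ a⁻¹ (φ (ρ a x)) with hψdef
    have hψc : Continuous ψ := (ρ₀ a⁻¹).continuous.comp (hφc.comp (ρ a).continuous)
    have hψs : Function.Surjective ψ :=
      (ρ₀ a⁻¹).surjective.comp (hφs.comp (ρ a).surjective)
    have hψsemi : ∀ h ∈ Γ₀, ∀ x : F, ρ₀ h (ψ x) = ψ (ρ h x) := by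
      intro h hh x
      have hmem : a * h * a⁻¹ ∈ Γ₀ := Subgroup.Normal.conj_mem ‹Γ₀.Normal› h hh a
      have e1 : ρ₀ h (ψ x) = ρ₀ a⁻¹ (ρ₀ (a * h * a⁻¹) (φ (ρ a x))) := by
        rw [hψdef]
        rw [← hρ₀ a⁻¹ (a * h * a⁻¹), ← hρ₀ h a⁻¹]
        congr 1
        group
      rw [e1, hφsemi _ hmem]
      have e2 : ρ (a * h * a⁻¹) (ρ a x) = ρ a (ρ h x) := by
        rw [← hρ (a * h * a⁻¹) a, ← hρ a h]
        congr 1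
        group
      rw [e2]
    have hψd : ∀ x : F, dist (ψ x) x < 1 := HA a haA ρ hρ hcA φ hφdA
    have hψeq : ψ = φ! := hu ψ ⟨hψc, hψs, hψsemi, hψd⟩
    have : ψ x = φ x := by rw [hψeq, hφeq]
    have h2 : ρ₀ a (ψ x) = ρ₀ a (φ x) := by rw [this]
    have h3 : ρ₀ a (ρ₀ a⁻¹ (φ (ρ a x))) = φ (ρ a x) := by
      rw [← hρ₀ a a⁻¹]; simp [act_one ρ₀ hρ₀]
    rw [hψdef] at h2
    simp only at h2
    rw [h3] at h2
    exact h2.symm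
  -- the set of intertwining elements is a subgroup containing Γ₀ and A
  set H : Subgroup Γ :=
    { carrier := {γ | ∀ x : F, ρ₀ γ (φ x) = φ (ρ γ x)}
      one_mem' := by intro x; rw [act_one ρ₀ hρ₀, act_one ρ hρ]
      mul_mem' := by
        intro g h hg hh x
        rw [hρ₀ g h, hρ g h, hh x, hg (ρ h x)]
      inv_mem' := by
        intro g hg x
        have := hg (ρ g⁻¹ x)
        have e2 : ρ g (ρ g⁻¹ x) = x := by rw [← hρ g g⁻¹]; simp [act_one ρ hρ]
        rw [e2] at this
        have := congrArg (fun y => ρ₀ g⁻¹ y) this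
        rw [← hρ₀ g⁻¹ g] at this
        simp [act_one ρ₀ hρ₀] at this
        exact this.symm } with hHdef
  have hΓ₀le : Γ₀ ≤ H := fun h hh x => hφsemi h hh x
  have hAle : Subgroup.closure (A : Set Γ) ≤ H :=
    (Subgroup.closure_le H).mpr (fun a ha => hAmem a ha)
  have htop : (⊤ : Subgroup Γ) ≤ H := hA ▸ sup_le hΓ₀le hAle
  exact fun γ x => htop (Subgroup.mem_top γ) x
end

section
/- Let Γ act on a compact metric space F by homeomorphisms via ρ₀ such that ρ₀ is (λ,U)-uniformly expanding with λ > 1. Let φ : F → F be a continuous map that is Γ-equivariant (ρ₀(γ)∘φ = φ∘ρ(γ)) for an action ρ with each expanding element λ'-expanding (λ' > 1) on the cover, and suppose d₀(φ, id) < ε/2 where ε is a Lebesgue number of the cover. Then for all x, y ∈ F: if d_F(x,y) ≥ ε then φ(x) ≠ φ(y); moreover inductively, if ε/(λ')^n < d_F(x,y) < ε/(λ')^{n−1} for some n ≥ 1, then φ(x) ≠ φ(y); hence φ is injective. -/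
/-- The expansion/injectivity argument.  Let `ρ₀` be a `(λ,U)`-uniformly expanding action
(with finite expanding open cover `U₁,…,U_k`, elements `γᵢ`, and Lebesgue number `ε`: every
pair of points at distance `< ε` lies in a common `Uᵢ`), `ρ` an action whose elements
`ρ(γᵢ)` are `λ'`-expanding on `Uᵢ` (`λ, λ' > 1`), and `φ` a continuous equivariant map
(`ρ₀(γ)∘φ = φ∘ρ(γ)`) with `d₀(φ, id) < ε/2`.  Then:
(i) if `d(x,y) ≥ ε` then `φ x ≠ φ y`; (ii) inductively, if
`ε/λ'ⁿ < d(x,y) < ε/λ'ⁿ⁻¹` for some `n ≥ 1`, then `φ x ≠ φ y`; hence (iii) `φ` is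
injective. -/
theorem stmt18 {Γ F : Type*} [Group Γ] [MetricSpace F] [CompactSpace F]
    (ρ₀ ρ : Γ → (F ≃ₜ F))
    (hρ₀ : ∀ g h : Γ, ∀ x : F, ρ₀ (g * h) x = ρ₀ g (ρ₀ h x))
    (hρ : ∀ g h : Γ, ∀ x : F, ρ (g * h) x = ρ g (ρ h x))
    (lam lam' : ℝ) (hlam : 1 < lam) (hlam' : 1 < lam')
    (k : ℕ) (U : Fin k → Set F) (hUopen : ∀ i, IsOpen (U i))
    (ε : ℝ) (hε : 0 < ε)
    (hleb : ∀ x y : F, dist x y < ε → ∃ i, x ∈ U i ∧ y ∈ U i)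
    (γ : Fin k → Γ)
    (hexp₀ : ∀ i, ∀ x ∈ U i, ∀ y ∈ U i,
      lam * dist x y ≤ dist (ρ₀ (γ i) x) (ρ₀ (γ i) y))
    (hexp : ∀ i, ∀ x ∈ U i, ∀ y ∈ U i,
      lam' * dist x y ≤ dist (ρ (γ i) x) (ρ (γ i) y))
    (φ : F → F) (hφcont : Continuous φ)
    (hequiv : ∀ g : Γ, ∀ x : F, ρ₀ g (φ x) = φ (ρ g x))
    (hclose : ∀ x : F, dist (φ x) x < ε / 2) :
    (∀ x y : F, ε ≤ dist x y → φ x ≠ φ y) ∧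
    (∀ n : ℕ, 1 ≤ n → ∀ x y : F,
      ε / lam' ^ n < dist x y → dist x y < ε / lam' ^ (n - 1) → φ x ≠ φ y) ∧
    Function.Injective φ := by
  have hlam'0 : (0:ℝ) < lam' := lt_trans one_pos hlam'
  have claimA : ∀ x y : F, ε ≤ dist x y → φ x ≠ φ y := by
    intro x y hxy heq
    have h1 : dist x y ≤ dist x (φ x) + dist (φ x) y := dist_triangle _ _ _
    rw [dist_comm x (φ x)] at h1
    have h2 : dist (φ x) y = dist (φ y) y := by rw [heq]
    linarith [hclose x, hclose y]
  have key : ∀ n : ℕ, ∀ x y : F, ε / lam' ^ n < dist x y → φ x ≠ φ y := by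
    intro n
    induction n with
    | zero =>
      intro x y h
      simp only [pow_zero, div_one] at h
      exact claimA x y h.le
    | succ n ih =>
      intro x y h heq
      by_cases hd : ε ≤ dist x y
      · exact claimA x y hd heq
      · push_neg at hd
        obtain ⟨i, hxU, hyU⟩ := hleb x y hd
        have hexpand := hexp i x hxU y hyU
        have hgt : ε / lam' ^ n < dist (ρ (γ i) x) (ρ (γ i) y) := by
          have h1 : lam' * (ε / lam' ^ (n+1)) < lam' * dist x y :=
            (mul_lt_mul_iff_right₀ hlam'0).mpr h
          have h2 : lam' * (ε / lam' ^ (n+1)) = ε / lam' ^ n := by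
            field_simp
            ring
          linarith
        have heq' : φ (ρ (γ i) x) = φ (ρ (γ i) y) := by
          rw [← hequiv, ← hequiv, heq]
        exact ih (ρ (γ i) x) (ρ (γ i) y) hgt heq'
  refine ⟨claimA, ?_, ?_⟩
  · intro n hn x y h1 _ heq
    exact key n x y h1 heq
  · intro a b heq
    by_contra hne
    have hpos : 0 < dist a b := dist_pos.mpr hne
    obtain ⟨n, hn⟩ := pow_unbounded_of_one_lt (ε / dist a b) hlam'
    have : ε / lam' ^ n < dist a b := by
      rw [div_lt_iff₀ (pow_pos hlam'0 n)]
      rw [div_lt_iff₀ hpos] at hn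
      linarith [hn]
    exact key n a b this heq
end
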